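/- For every n ≥ 1 and every ρ ∈ [0,1], the Sequential-flipping + SLN flip probability satisfies s(n) = ((K-1)/K)·(1 - (1 - Kρ/(K-1))^n) ≤ 1 - (1-ρ)^n = r(n), where K ≥ 2. -/

import Mathlib

/-!
Write `c = (K-1)/K` and `a = 1 - Kρ/(K-1)`, so that `c (1 - a) = ρ`. Both sides obey affine
recurrences with the same constant term: `s (n+1) = ρ + a s n` and `r (n+1) = ρ + (1-ρ) r n`.
Since `-1 ≤ a ≤ 1 - ρ`, the sequence `s` is nonnegative, so `a s ≤ (1-ρ) s ≤ (1-ρ) r`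
propagates `s ≤ r` from `s 0 = r 0 = 0`.
-/

lemma le_of_affine_recurrence {f g : ℕ → ℝ} {ρ a b : ℝ}
    (hf : ∀ n, f (n + 1) = ρ + a * f n) (hg : ∀ n, g (n + 1) = ρ + b * g n)
    (hab : a ≤ b) (hb : 0 ≤ b) (hf_nonneg : ∀ n, 0 ≤ f n) (h0 : f 0 ≤ g 0) :
    ∀ n, f n ≤ g n
  | 0 => h0
  | n + 1 => by
    have ih := le_of_affine_recurrence hf hg hab hb hf_nonneg h0 n
    rw [hf, hg]
    gcongr ρ + ?_
    calc a * f n ≤ b * f n := mul_le_mul_of_nonneg_right hab (hf_nonneg n)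
      _ ≤ b * g n := mul_le_mul_of_nonneg_left ih hb

lemma mul_one_sub_pow_le_one_sub_pow {ρ c a : ℝ} (hρ0 : 0 ≤ ρ) (hρ1 : ρ ≤ 1)
    (hc : 0 ≤ c) (ha_ge : -1 ≤ a) (ha_le : a ≤ 1 - ρ) (hca : c * (1 - a) = ρ) (n : ℕ) :
    c * (1 - a ^ n) ≤ 1 - (1 - ρ) ^ n := by
  have ha_abs : |a| ≤ 1 := abs_le.mpr ⟨ha_ge, by linarith⟩
  refine le_of_affine_recurrence (ρ := ρ) (f := fun n => c * (1 - a ^ n))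
    (g := fun n => 1 - (1 - ρ) ^ n) (fun n => ?_) (fun n => ?_) ha_le (by linarith)
    (fun n => ?_) (by norm_num) n
  · rw [← hca]
    ring
  · ring
  · have ha_pow : a ^ n ≤ 1 :=
      (le_abs_self _).trans (abs_pow a n ▸ pow_le_one₀ (abs_nonneg a) ha_abs)
    exact mul_nonneg hc (sub_nonneg.mpr ha_pow)

theorem seq_sln_le_veto_general (K : ℕ) (hK : 2 ≤ K) (n : ℕ)
    (ρ : ℝ) (hρ0 : 0 ≤ ρ) (hρ1 : ρ ≤ 1) :
    ((K : ℝ) - 1) / K * (1 - (1 - K * ρ / ((K : ℝ) - 1)) ^ n) ≤ 1 - (1 - ρ) ^ n := by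
  have hK2 : (2 : ℝ) ≤ K := by exact_mod_cast hK
  have hK1 : (0 : ℝ) < K - 1 := by linarith
  apply mul_one_sub_pow_le_one_sub_pow hρ0 hρ1 (by positivity)
  · rw [neg_le_sub_iff_le_add, div_le_iff₀ hK1]
    nlinarith
  · rw [sub_le_sub_iff_left, le_div_iff₀ hK1]
    nlinarith
  · field_simp
    ring

theorem seq_sln_le_veto (K : ℕ) (hK : 2 ≤ K) (n : ℕ) (hn : 1 ≤ n)
    (ρ : ℝ) (hρ0 : 0 ≤ ρ) (hρ1 : ρ ≤ 1) :
    ((K : ℝ) - 1) / K * (1 - (1 - K * ρ / ((K : ℝ) - 1)) ^ n) ≤ 1 - (1 - ρ) ^ n :=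
  seq_sln_le_veto_general K hK n ρ hρ0 hρ1
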